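/- Let F be the sequence of Fibonacci polynomials and let m ≥ 1, n ≥ 2. Then the star of David GCD property holds: gcd(F(m+1)·F(n−2), F(m)·F(n), F(m+2)·F(n−1)) is associated to gcd(F(m)·F(n−1), F(m+2)·F(n−2), F(m+1)·F(n)). -/
import Mathlib

open Polynomial

/-- The Fibonacci polynomials: `F 0 = 0`, `F 1 = 1`, `F (n+2) = x * F (n+1) + F n`. -/
noncomputable def fibPoly : ℕ → Polynomial ℤ
  | 0 => 0
  | 1 => 1
  | n + 2 => X * fibPoly (n + 1) + fibPoly n

private lemma fib_rec (n : ℕ) : fibPoly (n + 2) = X * fibPoly (n + 1) + fibPoly n := rfl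

private lemma fib_coeff0 : ∀ a : ℕ,
    (fibPoly (2 * a)).coeff 0 = 0 ∧ (fibPoly (2 * a + 1)).coeff 0 = 1 := by
  intro a
  induction a with
  | zero => simp [fibPoly]
  | succ a ih =>
    have h1 : 2 * (a + 1) = (2 * a) + 2 := by ring
    have h2 : 2 * (a + 1) + 1 = (2 * a + 1) + 2 := by ring
    constructor
    · rw [h1, fib_rec, coeff_add, mul_coeff_zero, coeff_X_zero, zero_mul, zero_add, ih.1]
    · rw [h2, fib_rec, coeff_add, mul_coeff_zero, coeff_X_zero, zero_mul, zero_add, ih.2]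

private lemma fib_coeff1_even : ∀ a : ℕ, (fibPoly (2 * a)).coeff 1 = (a : ℤ) := by
  intro a
  induction a with
  | zero => simp [fibPoly]
  | succ a ih =>
    have h1 : 2 * (a + 1) = (2 * a) + 2 := by ring
    rw [h1, fib_rec, coeff_add]
    have : (X * fibPoly (2 * a + 1)).coeff 1 = (fibPoly (2 * a + 1)).coeff 0 :=
      coeff_X_mul _ 0
    rw [this, (fib_coeff0 a).2, ih]
    push_cast; ring

private lemma X_dvd_fib_even (a : ℕ) : (X : Polynomial ℤ) ∣ fibPoly (2 * a) :=
  X_dvd_iff.mpr (fib_coeff0 a).1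

private lemma X_not_dvd_fib_odd (a : ℕ) : ¬ (X : Polynomial ℤ) ∣ fibPoly (2 * a + 1) := by
  rw [X_dvd_iff, (fib_coeff0 a).2]; exact one_ne_zero

private lemma X2_not_dvd_fib_even (a : ℕ) :
    ¬ (X : Polynomial ℤ) ^ 2 ∣ fibPoly (2 * (a + 1)) := by
  intro ⟨t, ht⟩
  have h1 : (fibPoly (2 * (a + 1))).coeff 1 = 0 := by
    rw [ht, sq, mul_assoc]
    rw [show (1 : ℕ) = 0 + 1 from rfl, coeff_X_mul, mul_coeff_zero, coeff_X_zero, zero_mul]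
  rw [fib_coeff1_even] at h1
  push_cast at h1; omega

private lemma fib_consec : ∀ k : ℕ, IsCoprime (fibPoly k) (fibPoly (k + 1)) := by
  intro k
  induction k with
  | zero => exact isCoprime_zero_left.mpr isUnit_one
  | succ k ih =>
    rw [fib_rec]
    have h := (ih.symm).add_mul_right_right X
    rwa [add_comm (fibPoly k)] at h

/-- common divisor of `F k` and `F (k+2)` divides `X`. -/
private lemma fib_skip2 {p : Polynomial ℤ} (k : ℕ)
    (h1 : p ∣ fibPoly k) (h2 : p ∣ fibPoly (k + 2)) : p ∣ (X : Polynomial ℤ) := by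
  obtain ⟨u, v, huv⟩ := fib_consec k
  have hX : X = (X * u) * fibPoly k + v * (X * fibPoly (k + 1)) := by
    linear_combination (-X : Polynomial ℤ) * huv
  have h3 : p ∣ X * fibPoly (k + 1) := by
    have : X * fibPoly (k + 1) = fibPoly (k + 2) - fibPoly k := by
      rw [fib_rec]; ring
    rw [this]; exact dvd_sub h2 h1
  rw [hX]
  exact dvd_add (h1.mul_left _) (h3.mul_left _)

private lemma X_dvd_fib_even' {t s : ℕ} (h : t = 2 * s) : (X : Polynomial ℤ) ∣ fibPoly t :=
  h ▸ X_dvd_fib_even s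

private lemma X_not_dvd_fib_odd' {t s : ℕ} (h : t = 2 * s + 1) :
    ¬ (X : Polynomial ℤ) ∣ fibPoly t := h ▸ X_not_dvd_fib_odd s

private lemma X2_not_dvd_fib_even' {t s : ℕ} (h : t = 2 * (s + 1)) :
    ¬ (X : Polynomial ℤ) ^ 2 ∣ fibPoly t := h ▸ X2_not_dvd_fib_even s

private lemma fib_ne_zero {t : ℕ} (h : 1 ≤ t) : fibPoly t ≠ 0 := by
  intro h0
  rcases Nat.even_or_odd t with ⟨s, hs⟩ | ⟨s, hs⟩
  · have h2 : t = 2 * s := by omega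
    have hc := fib_coeff1_even s
    rw [← h2, h0] at hc
    simp only [coeff_zero] at hc
    have : s = 0 := by exact_mod_cast hc.symm
    omega
  · have hc := (fib_coeff0 s).2
    rw [show 2 * s + 1 = t by omega, h0] at hc
    simp at hc

private lemma fib_consec_contra {p : Polynomial ℤ} (hp : Prime p) (k : ℕ)
    (h1 : p ∣ fibPoly k) (h2 : p ∣ fibPoly (k + 1)) : False :=
  hp.not_unit ((fib_consec k).isUnit_of_dvd' h1 h2)

private lemma X_not_dvd_mul_odd {t u s r : ℕ} (ht : t = 2 * s + 1) (hu : u = 2 * r + 1) :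
    ¬ (X : Polynomial ℤ) ∣ fibPoly t * fibPoly u := by
  intro h
  rcases (Polynomial.prime_X (R := ℤ)).dvd_mul.mp h with h | h
  · exact X_not_dvd_fib_odd' ht h
  · exact X_not_dvd_fib_odd' hu h

/-- key prime chase for the first triangle. -/
private lemma key1 (j k : ℕ) (p : Polynomial ℤ) (hp : Prime p)
    (h1 : p ∣ fibPoly (j + 2) * fibPoly k)
    (h2 : p ∣ fibPoly (j + 1) * fibPoly (k + 2))
    (h3 : p ∣ fibPoly (j + 3) * fibPoly (k + 1)) : p ∣ (X : Polynomial ℤ) := by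
  rcases hp.dvd_mul.mp h1 with hB | hP
  · rcases hp.dvd_mul.mp h2 with hA | hR
    · exact (fib_consec_contra hp (j + 1) hA hB).elim
    · rcases hp.dvd_mul.mp h3 with hC | hQ
      · exact (fib_consec_contra hp (j + 2) hB hC).elim
      · exact (fib_consec_contra hp (k + 1) hQ hR).elim
  · rcases hp.dvd_mul.mp h3 with hC | hQ
    · rcases hp.dvd_mul.mp h2 with hA | hR
      · exact fib_skip2 (j + 1) hA hC
      · exact fib_skip2 k hP hR
    · exact (fib_consec_contra hp k hP hQ).elim

/-- key prime chase for the second triangle. -/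
private lemma key2 (j k : ℕ) (p : Polynomial ℤ) (hp : Prime p)
    (h1 : p ∣ fibPoly (j + 1) * fibPoly (k + 1))
    (h2 : p ∣ fibPoly (j + 3) * fibPoly k)
    (h3 : p ∣ fibPoly (j + 2) * fibPoly (k + 2)) : p ∣ (X : Polynomial ℤ) := by
  rcases hp.dvd_mul.mp h1 with hA | hQ
  · rcases hp.dvd_mul.mp h3 with hB | hR
    · exact (fib_consec_contra hp (j + 1) hA hB).elim
    · rcases hp.dvd_mul.mp h2 with hC | hP
      · exact fib_skip2 (j + 1) hA hC
      · exact fib_skip2 k hP hR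
  · rcases hp.dvd_mul.mp h2 with hC | hP
    · rcases hp.dvd_mul.mp h3 with hB | hR
      · exact (fib_consec_contra hp (j + 2) hB hC).elim
      · exact (fib_consec_contra hp (k + 1) hQ hR).elim
    · exact (fib_consec_contra hp k hP hQ).elim

private lemma gcd_assoc_X (a b c : Polynomial ℤ) (ha : X ∣ a) (hb : X ∣ b) (hc : X ∣ c)
    (hc2 : ¬ (X : Polynomial ℤ) ^ 2 ∣ c)
    (key : ∀ p : Polynomial ℤ, Prime p → p ∣ a → p ∣ b → p ∣ c → p ∣ (X : Polynomial ℤ)) :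
    Associated (gcd (gcd a b) c) (X : Polynomial ℤ) := by
  set d := gcd (gcd a b) c with hd
  have hda : d ∣ a := (gcd_dvd_left _ _).trans (gcd_dvd_left _ _)
  have hdb : d ∣ b := (gcd_dvd_left _ _).trans (gcd_dvd_right _ _)
  have hdc : d ∣ c := gcd_dvd_right _ _
  have hc0 : c ≠ 0 := fun h => hc2 (h ▸ dvd_zero _)
  have hdX : X ∣ d := dvd_gcd (dvd_gcd ha hb) hc
  obtain ⟨e, he⟩ := hdX
  have hu : IsUnit e := by
    by_contra hnu
    have he0 : e ≠ 0 := by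
      rintro rfl
      rw [mul_zero] at he
      exact hc0 (zero_dvd_iff.mp (he ▸ hdc))
    obtain ⟨q, hq, hqe⟩ := WfDvdMonoid.exists_irreducible_factor hnu he0
    have hqp : Prime q := UniqueFactorizationMonoid.irreducible_iff_prime.mp hq
    have hqd : q ∣ d := he ▸ hqe.mul_left X
    have hqX : q ∣ (X : Polynomial ℤ) :=
      key q hqp (hqd.trans hda) (hqd.trans hdb) (hqd.trans hdc)
    have hassoc : Associated q (X : Polynomial ℤ) :=
      hqp.associated_of_dvd Polynomial.prime_X hqX
    have hXe : (X : Polynomial ℤ) ∣ e := hassoc.symm.dvd.trans hqe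
    have : (X : Polynomial ℤ) ^ 2 ∣ d := by
      rw [he, sq]; exact mul_dvd_mul_left X hXe
    exact hc2 (this.trans hdc)
  exact (Associated.symm ⟨hu.unit, by rw [IsUnit.unit_spec]; exact he.symm⟩)

private lemma gcd_isUnit (a b c : Polynomial ℤ)
    (key : ∀ p : Polynomial ℤ, Prime p → p ∣ a → p ∣ b → p ∣ c → p ∣ (X : Polynomial ℤ))
    (hnX : ¬ (X : Polynomial ℤ) ∣ gcd (gcd a b) c) (hc0 : c ≠ 0) :
    IsUnit (gcd (gcd a b) c) := by
  set d := gcd (gcd a b) c with hd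
  by_contra hnu
  have hda : d ∣ a := (gcd_dvd_left _ _).trans (gcd_dvd_left _ _)
  have hdb : d ∣ b := (gcd_dvd_left _ _).trans (gcd_dvd_right _ _)
  have hdc : d ∣ c := gcd_dvd_right _ _
  have hd0 : d ≠ 0 := fun h => hc0 (zero_dvd_iff.mp (h ▸ hdc))
  obtain ⟨q, hq, hqd⟩ := WfDvdMonoid.exists_irreducible_factor hnu hd0
  have hqp : Prime q := UniqueFactorizationMonoid.irreducible_iff_prime.mp hq
  have hqX : q ∣ (X : Polynomial ℤ) :=
    key q hqp (hqd.trans hda) (hqd.trans hdb) (hqd.trans hdc)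
  have hassoc : Associated q (X : Polynomial ℤ) :=
    hqp.associated_of_dvd Polynomial.prime_X hqX
  exact hnX (hassoc.symm.dvd.trans hqd)


theorem star_of_david_fibonacci_polynomials (m n : ℕ) (hm : 1 ≤ m) (hn : 2 ≤ n) :
    Associated
      (gcd (gcd (fibPoly (m + 1) * fibPoly (n - 2)) (fibPoly m * fibPoly n))
        (fibPoly (m + 2) * fibPoly (n - 1)))
      (gcd (gcd (fibPoly m * fibPoly (n - 1)) (fibPoly (m + 2) * fibPoly (n - 2)))
        (fibPoly (m + 1) * fibPoly n)) := by
  obtain ⟨j, rfl⟩ : ∃ j, m = j + 1 := ⟨m - 1, by omega⟩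
  obtain ⟨k, rfl⟩ : ∃ k, n = k + 2 := ⟨n - 2, by omega⟩
  simp only [show j + 1 + 1 = j + 2 from rfl, show j + 1 + 2 = j + 3 from rfl,
    show k + 2 - 2 = k from rfl, show k + 2 - 1 = k + 1 from rfl]
  rcases Nat.even_or_odd j with ⟨a0, haj⟩ | ⟨a0, haj⟩
  ·
    -- j even, so m = j+1 odd : both gcds are units
    obtain ⟨a, rfl⟩ : ∃ a, j = 2 * a := ⟨a0, by omega⟩
    rcases Nat.even_or_odd k with ⟨b0, hbk⟩ | ⟨b0, hbk⟩
    ·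
      -- m odd, n even : gcds are units
      obtain ⟨b, rfl⟩ : ∃ b, k = 2 * b := ⟨b0, by omega⟩
      have hu1 : IsUnit (gcd (gcd (fibPoly (2*a + 2) * fibPoly (2*b))
          (fibPoly (2*a + 1) * fibPoly (2*b + 2))) (fibPoly (2*a + 3) * fibPoly (2*b + 1))) := by
        refine gcd_isUnit _ _ _ (key1 (2*a) (2*b)) ?_ ?_
        · intro hX
          exact X_not_dvd_mul_odd (s := a + 1) (r := b) (by ring) rfl
            (hX.trans (gcd_dvd_right _ _))
        · exact mul_ne_zero (fib_ne_zero (by omega)) (fib_ne_zero (by omega))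
      have hu2 : IsUnit (gcd (gcd (fibPoly (2*a + 1) * fibPoly (2*b + 1))
          (fibPoly (2*a + 3) * fibPoly (2*b))) (fibPoly (2*a + 2) * fibPoly (2*b + 2))) := by
        refine gcd_isUnit _ _ _ (key2 (2*a) (2*b)) ?_ ?_
        · intro hX
          exact X_not_dvd_mul_odd (s := a) (r := b) rfl rfl
            (hX.trans ((gcd_dvd_left _ _).trans (gcd_dvd_left _ _)))
        · exact mul_ne_zero (fib_ne_zero (by omega)) (fib_ne_zero (by omega))
      exact (associated_one_iff_isUnit.mpr hu1).trans
        (associated_one_iff_isUnit.mpr hu2).symm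
    ·
      -- m odd, n odd : gcds are units
      obtain ⟨b, rfl⟩ : ∃ b, k = 2 * b + 1 := ⟨b0, by omega⟩
      have hu1 : IsUnit (gcd (gcd (fibPoly (2*a + 2) * fibPoly (2*b + 1))
          (fibPoly (2*a + 1) * fibPoly (2*b + 3))) (fibPoly (2*a + 3) * fibPoly (2*b + 2))) := by
        refine gcd_isUnit _ _ _ (key1 (2*a) (2*b + 1)) ?_ ?_
        · intro hX
          exact X_not_dvd_mul_odd (s := a) (r := b + 1) rfl (by ring)
            (hX.trans ((gcd_dvd_left _ _).trans (gcd_dvd_right _ _)))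
        · exact mul_ne_zero (fib_ne_zero (by omega)) (fib_ne_zero (by omega))
      have hu2 : IsUnit (gcd (gcd (fibPoly (2*a + 1) * fibPoly (2*b + 2))
          (fibPoly (2*a + 3) * fibPoly (2*b + 1))) (fibPoly (2*a + 2) * fibPoly (2*b + 3))) := by
        refine gcd_isUnit _ _ _ (key2 (2*a) (2*b + 1)) ?_ ?_
        · intro hX
          exact X_not_dvd_mul_odd (s := a + 1) (r := b) (by ring) rfl
            (hX.trans ((gcd_dvd_left _ _).trans (gcd_dvd_right _ _)))
        · exact mul_ne_zero (fib_ne_zero (by omega)) (fib_ne_zero (by omega))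
      exact (associated_one_iff_isUnit.mpr hu1).trans
        (associated_one_iff_isUnit.mpr hu2).symm
  ·
    -- j odd, so m = j+1 even
    obtain ⟨a, rfl⟩ : ∃ a, j = 2 * a + 1 := ⟨a0, by omega⟩
    rcases Nat.even_or_odd k with ⟨b0, hbk⟩ | ⟨b0, hbk⟩
    ·
      -- m even, n even : both gcds associated to X
      obtain ⟨b, rfl⟩ : ∃ b, k = 2 * b := ⟨b0, by omega⟩
      have h1 : Associated (gcd (gcd (fibPoly (2*a + 1 + 2) * fibPoly (2*b))
          (fibPoly (2*a + 1 + 1) * fibPoly (2*b + 2)))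
          (fibPoly (2*a + 1 + 3) * fibPoly (2*b + 1))) (X : Polynomial ℤ) := by
        refine gcd_assoc_X _ _ _ ?_ ?_ ?_ ?_ (key1 (2*a + 1) (2*b))
        · exact (X_dvd_fib_even' (s := b) rfl).mul_left _
        · exact (X_dvd_fib_even' (s := a + 1) (by ring)).mul_right _
        · exact (X_dvd_fib_even' (s := a + 2) (by ring)).mul_right _
        · intro hX2
          exact X2_not_dvd_fib_even' (s := a + 1) (by ring)
            ((Polynomial.prime_X (R := ℤ)).pow_dvd_of_dvd_mul_right 2
              (X_not_dvd_fib_odd' (s := b) rfl) hX2)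
      have h2 : Associated (gcd (gcd (fibPoly (2*a + 1 + 1) * fibPoly (2*b + 1))
          (fibPoly (2*a + 1 + 3) * fibPoly (2*b)))
          (fibPoly (2*a + 1 + 2) * fibPoly (2*b + 2))) (X : Polynomial ℤ) := by
        refine gcd_assoc_X _ _ _ ?_ ?_ ?_ ?_ (key2 (2*a + 1) (2*b))
        · exact (X_dvd_fib_even' (s := a + 1) (by ring)).mul_right _
        · exact (X_dvd_fib_even' (s := a + 2) (by ring)).mul_right _
        · exact (X_dvd_fib_even' (s := b + 1) (by ring)).mul_left _
        · intro hX2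
          exact X2_not_dvd_fib_even' (s := b) (by ring)
            ((Polynomial.prime_X (R := ℤ)).pow_dvd_of_dvd_mul_left 2
              (X_not_dvd_fib_odd' (s := a + 1) (by ring)) hX2)
      exact h1.trans h2.symm
    ·
      -- m even, n odd : gcds are units
      obtain ⟨b, rfl⟩ : ∃ b, k = 2 * b + 1 := ⟨b0, by omega⟩
      have hu1 : IsUnit (gcd (gcd (fibPoly (2*a + 1 + 2) * fibPoly (2*b + 1))
          (fibPoly (2*a + 1 + 1) * fibPoly (2*b + 3)))
          (fibPoly (2*a + 1 + 3) * fibPoly (2*b + 2))) := by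
        refine gcd_isUnit _ _ _ (key1 (2*a + 1) (2*b + 1)) ?_ ?_
        · intro hX
          exact X_not_dvd_mul_odd (s := a + 1) (r := b) (by ring) rfl
            (hX.trans ((gcd_dvd_left _ _).trans (gcd_dvd_left _ _)))
        · exact mul_ne_zero (fib_ne_zero (by omega)) (fib_ne_zero (by omega))
      have hu2 : IsUnit (gcd (gcd (fibPoly (2*a + 1 + 1) * fibPoly (2*b + 2))
          (fibPoly (2*a + 1 + 3) * fibPoly (2*b + 1)))
          (fibPoly (2*a + 1 + 2) * fibPoly (2*b + 3))) := by
        refine gcd_isUnit _ _ _ (key2 (2*a + 1) (2*b + 1)) ?_ ?_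
        · intro hX
          exact X_not_dvd_mul_odd (s := a + 1) (r := b + 1) (by ring) (by ring)
            (hX.trans (gcd_dvd_right _ _))
        · exact mul_ne_zero (fib_ne_zero (by omega)) (fib_ne_zero (by omega))
      exact (associated_one_iff_isUnit.mpr hu1).trans
        (associated_one_iff_isUnit.mpr hu2).symm
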